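/- Let R(τ) = (1/2)·log(G₁₂(τ)² − G₁₁(τ)²). Then lim_{τ→∞} [R(τ) − (1/2)·log τ] = (1/2)·log(128/π⁴); in particular the Rényi entropy of the resonant mode grows logarithmically, R(τ) ∼ (1/2)·log τ. -/

import Mathlib

open Real Filter Topology

/-- Complete elliptic integral of the first kind. -/
noncomputable def ellipticK (k : ℝ) : ℝ :=
  ∫ α in (0:ℝ)..(Real.pi / 2), 1 / Real.sqrt (1 - k ^ 2 * Real.sin α ^ 2)

/-- Complete elliptic integral of the second kind. -/
noncomputable def ellipticE (k : ℝ) : ℝ :=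
  ∫ α in (0:ℝ)..(Real.pi / 2), Real.sqrt (1 - k ^ 2 * Real.sin α ^ 2)

/-- κ(τ) = √(1 − e^{−8τ}). -/
noncomputable def kappa (τ : ℝ) : ℝ := Real.sqrt (1 - Real.exp (-8 * τ))

/-- κ̃(τ) = e^{−4τ}. -/
noncomputable def kappaT (τ : ℝ) : ℝ := Real.exp (-4 * τ)

/-- Diagonal entry of the reduced covariance matrix of the resonant mode. -/
noncomputable def G₁₁ (τ : ℝ) : ℝ :=
  -(4 / (Real.pi ^ 2 * kappa τ ^ 2)) *
    ((ellipticE (kappa τ) - kappaT τ ^ 2 * ellipticK (kappa τ)) *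
      (ellipticK (kappa τ) - ellipticE (kappa τ)))

/-- Off-diagonal entry of the reduced covariance matrix of the resonant mode. -/
noncomputable def G₁₂ (τ : ℝ) : ℝ :=
  (4 / Real.pi ^ 2) * (ellipticE (kappa τ) * ellipticK (kappa τ))

/-! The elementary integral `∫₀^{π/2} sin α / √(1 - k² sin² α) dα = arsinh (k / k') / k`, with
`k' = √(1 - k²)`, approximates `K(k)` to within `π/2`, because the difference of the integrands,
`(1 - sin α) / √(1 - k² sin² α)`, lies in `[0, 1]` on `[0, π/2]`. For `k = κ τ` we have
`k' = κ̃ τ = e^{-4τ}`, so `K(κ τ) / τ → 4`, while `E(κ τ) → E(1) = 1`. The leading terms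
`256 τ² / π⁴` of `G₁₂²` and `G₁₁²` cancel, which is seen by factoring: `G₁₂ + G₁₁ → 4 / π²` and
`(G₁₂ - G₁₁) / τ → 32 / π²`. -/

section EllipticBounds

variable {k : ℝ}

lemma one_sub_sq_mul_sin_sq_pos (hk : k ^ 2 < 1) (α : ℝ) : 0 < 1 - k ^ 2 * sin α ^ 2 := by
  nlinarith [mul_le_of_le_one_right (sq_nonneg k) (sin_sq_le_one α)]

lemma continuous_one_div_sqrt_one_sub_sq_mul_sin_sq (hk : k ^ 2 < 1) :
    Continuous fun α => 1 / √(1 - k ^ 2 * sin α ^ 2) :=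
  continuous_const.div (by fun_prop) fun α => (sqrt_pos.2 (one_sub_sq_mul_sin_sq_pos hk α)).ne'

lemma continuous_sin_div_sqrt_one_sub_sq_mul_sin_sq (hk : k ^ 2 < 1) :
    Continuous fun α => sin α / √(1 - k ^ 2 * sin α ^ 2) :=
  continuous_sin.div (by fun_prop) fun α => (sqrt_pos.2 (one_sub_sq_mul_sin_sq_pos hk α)).ne'

lemma hasDerivAt_arsinh_mul_cos_div (hk0 : 0 < k) (hk1 : k < 1) (α : ℝ) :
    HasDerivAt (fun α => -arsinh (k * cos α / √(1 - k ^ 2)) / k)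
      (sin α / √(1 - k ^ 2 * sin α ^ 2)) α := by
  have hk' : 0 < √(1 - k ^ 2) := sqrt_pos.2 (by nlinarith)
  have h := (((hasDerivAt_cos α).const_mul k).div_const (√(1 - k ^ 2))).arsinh.neg.div_const k
  refine h.congr_deriv ?_
  have hD : 1 - k ^ 2 * sin α ^ 2 = (1 - k ^ 2) * (1 + (k * cos α / √(1 - k ^ 2)) ^ 2) := by
    have hk2 : 1 - k ^ 2 ≠ 0 := by nlinarith
    rw [div_pow, sq_sqrt (by nlinarith)]
    field_simp
    linear_combination (-k ^ 2) * sin_sq_add_cos_sq α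
  rw [hD, sqrt_mul (by nlinarith), smul_eq_mul]
  field_simp

lemma integral_sin_div_sqrt_one_sub_sq_mul_sin_sq (hk0 : 0 < k) (hk1 : k < 1) :
    ∫ α in (0 : ℝ)..π / 2, sin α / √(1 - k ^ 2 * sin α ^ 2) = arsinh (k / √(1 - k ^ 2)) / k := by
  rw [intervalIntegral.integral_eq_sub_of_hasDerivAt
    (fun α _ => hasDerivAt_arsinh_mul_cos_div hk0 hk1 α)
    ((continuous_sin_div_sqrt_one_sub_sq_mul_sin_sq (by nlinarith)).intervalIntegrable _ _)]
  simp [neg_div]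

lemma integral_sin_div_sqrt_le_ellipticK (hk : k ^ 2 < 1) :
    ∫ α in (0 : ℝ)..π / 2, sin α / √(1 - k ^ 2 * sin α ^ 2) ≤ ellipticK k :=
  intervalIntegral.integral_mono_on (by positivity)
    ((continuous_sin_div_sqrt_one_sub_sq_mul_sin_sq hk).intervalIntegrable _ _)
    ((continuous_one_div_sqrt_one_sub_sq_mul_sin_sq hk).intervalIntegrable _ _)
    fun α _ => div_le_div_of_nonneg_right (sin_le_one α) (sqrt_nonneg _)

lemma one_sub_sin_le_sqrt_one_sub_sq_mul_sin_sq (hk : k ^ 2 ≤ 1) {α : ℝ} (hα : 0 ≤ sin α) :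
    1 - sin α ≤ √(1 - k ^ 2 * sin α ^ 2) :=
  le_sqrt_of_sq_le (by nlinarith [sin_le_one α])

lemma ellipticK_le_integral_sin_div_sqrt_add (hk : k ^ 2 < 1) :
    ellipticK k ≤ (∫ α in (0 : ℝ)..π / 2, sin α / √(1 - k ^ 2 * sin α ^ 2)) + π / 2 := by
  have hint := (continuous_sin_div_sqrt_one_sub_sq_mul_sin_sq hk).intervalIntegrable
    (μ := MeasureTheory.volume) 0 (π / 2)
  rw [← sub_le_iff_le_add', ellipticK, ← intervalIntegral.integral_sub
    ((continuous_one_div_sqrt_one_sub_sq_mul_sin_sq hk).intervalIntegrable _ _) hint]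
  calc (∫ α in (0 : ℝ)..π / 2, (1 / √(1 - k ^ 2 * sin α ^ 2) - sin α / √(1 - k ^ 2 * sin α ^ 2)))
      ≤ ∫ _ in (0 : ℝ)..π / 2, (1 : ℝ) := by
        refine intervalIntegral.integral_mono_on (by positivity) ?_ intervalIntegrable_const
          fun α hα => ?_
        · exact ((continuous_one_div_sqrt_one_sub_sq_mul_sin_sq hk).sub
            (continuous_sin_div_sqrt_one_sub_sq_mul_sin_sq hk)).intervalIntegrable _ _
        have hsin : 0 ≤ sin α := sin_nonneg_of_nonneg_of_le_pi hα.1 (by linarith [hα.2, pi_pos])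
        rw [← sub_div, div_le_one (sqrt_pos.2 (one_sub_sq_mul_sin_sq_pos hk α))]
        exact one_sub_sin_le_sqrt_one_sub_sq_mul_sin_sq hk.le hsin
    _ = π / 2 := by simp

lemma arsinh_div_le_ellipticK (hk0 : 0 < k) (hk1 : k < 1) :
    arsinh (k / √(1 - k ^ 2)) / k ≤ ellipticK k :=
  integral_sin_div_sqrt_one_sub_sq_mul_sin_sq hk0 hk1 ▸
    integral_sin_div_sqrt_le_ellipticK (by nlinarith)

lemma ellipticK_le_arsinh_div_add (hk0 : 0 < k) (hk1 : k < 1) :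
    ellipticK k ≤ arsinh (k / √(1 - k ^ 2)) / k + π / 2 :=
  integral_sin_div_sqrt_one_sub_sq_mul_sin_sq hk0 hk1 ▸
    ellipticK_le_integral_sin_div_sqrt_add (by nlinarith)

end EllipticBounds

lemma continuous_ellipticE : Continuous ellipticE :=
  intervalIntegral.continuous_parametric_intervalIntegral_of_continuous (μ := MeasureTheory.volume)
    (by fun_prop) continuous_const

lemma ellipticE_one : ellipticE 1 = 1 := by
  rw [ellipticE, intervalIntegral.integral_congr (μ := MeasureTheory.volume) (g := cos)
    fun α hα => ?_]
  · simp
  rw [Set.uIcc_of_le (by positivity)] at hα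
  rw [one_pow, one_mul, ← cos_sq',
    sqrt_sq (cos_nonneg_of_mem_Icc ⟨by linarith [hα.1, pi_pos], hα.2⟩)]

lemma log_le_arsinh {x : ℝ} (hx : 0 < x) : log x ≤ arsinh x :=
  log_le_log hx (by linarith [sqrt_nonneg (1 + x ^ 2)])

lemma arsinh_le_log_one_add_two_mul {x : ℝ} (hx : 0 ≤ x) : arsinh x ≤ log (1 + 2 * x) := by
  refine log_le_log (by positivity) ?_
  have : √(1 + x ^ 2) ≤ 1 + x := sqrt_le_iff.2 ⟨by positivity, by nlinarith⟩
  linarith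

section Resonance

variable {τ : ℝ}

lemma kappaT_pos (τ : ℝ) : 0 < kappaT τ := exp_pos _

lemma kappaT_le_one (hτ : 0 ≤ τ) : kappaT τ ≤ 1 := exp_le_one_iff.2 (by linarith)

lemma kappaT_sq (τ : ℝ) : kappaT τ ^ 2 = exp (-8 * τ) := by
  rw [kappaT, ← exp_nat_mul]; ring_nf

lemma log_kappaT (τ : ℝ) : log (kappaT τ) = -4 * τ := log_exp _

lemma kappa_eq (τ : ℝ) : kappa τ = √(1 - kappaT τ ^ 2) := by
  rw [kappa, kappaT_sq]

lemma kappa_sq (hτ : 0 ≤ τ) : kappa τ ^ 2 = 1 - kappaT τ ^ 2 := by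
  rw [kappa_eq, sq_sqrt (by nlinarith [kappaT_pos τ, kappaT_le_one hτ])]

lemma kappa_pos (hτ : 0 < τ) : 0 < kappa τ := by
  rw [kappa_eq]
  have : kappaT τ < 1 := exp_lt_one_iff.2 (by linarith)
  exact sqrt_pos.2 (by nlinarith [kappaT_pos τ])

lemma kappa_lt_one (τ : ℝ) : kappa τ < 1 := by
  rw [kappa_eq, sqrt_lt' one_pos]
  nlinarith [kappaT_pos τ]

lemma sqrt_one_sub_kappa_sq (hτ : 0 ≤ τ) : √(1 - kappa τ ^ 2) = kappaT τ := by
  rw [kappa_sq hτ, sub_sub_cancel, sqrt_sq (kappaT_pos τ).le]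

lemma tendsto_pow_mul_kappaT_sq (n : ℕ) : Tendsto (fun τ => τ ^ n * kappaT τ ^ 2) atTop (𝓝 0) := by
  simpa [kappaT_sq] using tendsto_rpow_mul_exp_neg_mul_atTop_nhds_zero n 8 (by norm_num)

lemma tendsto_kappa : Tendsto kappa atTop (𝓝 1) := by
  have h := ((tendsto_pow_mul_kappaT_sq 0).const_sub 1).sqrt
  simpa [← kappa_eq] using h

lemma tendsto_ellipticE_kappa : Tendsto (fun τ => ellipticE (kappa τ)) atTop (𝓝 1) :=
  ellipticE_one ▸ (continuous_ellipticE.tendsto 1).comp tendsto_kappa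

lemma log_kappa_add_le_ellipticK (hτ : 0 < τ) :
    log (kappa τ) + 4 * τ ≤ ellipticK (kappa τ) := by
  have hk := kappa_pos hτ
  calc log (kappa τ) + 4 * τ = log (kappa τ / kappaT τ) := by
        rw [log_div hk.ne' (kappaT_pos τ).ne', log_kappaT]; ring
    _ ≤ arsinh (kappa τ / kappaT τ) := log_le_arsinh (div_pos hk (kappaT_pos τ))
    _ ≤ arsinh (kappa τ / kappaT τ) / kappa τ :=
        le_div_self (arsinh_nonneg_iff.2 (div_pos hk (kappaT_pos τ)).le) hk (kappa_lt_one τ).le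
    _ ≤ ellipticK (kappa τ) :=
        sqrt_one_sub_kappa_sq hτ.le ▸ arsinh_div_le_ellipticK hk (kappa_lt_one τ)

lemma ellipticK_le_log_three_add (hτ : 0 < τ) :
    ellipticK (kappa τ) ≤ (log 3 + 4 * τ) / kappa τ + π / 2 := by
  have hk := kappa_pos hτ
  have hkT := kappaT_pos τ
  have harg : 1 + 2 * (kappa τ / kappaT τ) ≤ 3 / kappaT τ := by
    rw [le_div_iff₀ hkT, add_mul, one_mul, mul_assoc, div_mul_cancel₀ _ hkT.ne']
    linarith [kappaT_le_one hτ.le, kappa_lt_one τ]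
  calc ellipticK (kappa τ) ≤ arsinh (kappa τ / kappaT τ) / kappa τ + π / 2 :=
        sqrt_one_sub_kappa_sq hτ.le ▸ ellipticK_le_arsinh_div_add hk (kappa_lt_one τ)
    _ ≤ log (3 / kappaT τ) / kappa τ + π / 2 := by
        gcongr
        exact (arsinh_le_log_one_add_two_mul (div_pos hk hkT).le).trans
          (log_le_log (by positivity) harg)
    _ = (log 3 + 4 * τ) / kappa τ + π / 2 := by
        rw [log_div (by norm_num) hkT.ne', log_kappaT]; ring_nf

lemma tendsto_ellipticK_kappa_div_self :
    Tendsto (fun τ => ellipticK (kappa τ) / τ) atTop (𝓝 4) := by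
  have hlog : Tendsto (fun τ => log (kappa τ)) atTop (𝓝 0) := by
    simpa using tendsto_kappa.log one_ne_zero
  have hlower : Tendsto (fun τ => log (kappa τ) * τ⁻¹ + 4) atTop (𝓝 4) := by
    simpa using (hlog.mul tendsto_inv_atTop_zero).add_const 4
  have hupper : Tendsto (fun τ => (log 3 * τ⁻¹ + 4) / kappa τ + π / 2 * τ⁻¹) atTop (𝓝 4) := by
    simpa using (((tendsto_inv_atTop_zero.const_mul (log 3)).add_const 4).div tendsto_kappa
      one_ne_zero).add (tendsto_inv_atTop_zero.const_mul (π / 2))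
  refine tendsto_of_tendsto_of_tendsto_of_le_of_le' hlower hupper ?_ ?_ <;>
    filter_upwards [eventually_gt_atTop 0] with τ hτ
  · calc log (kappa τ) * τ⁻¹ + 4 = (log (kappa τ) + 4 * τ) / τ := by field_simp
      _ ≤ ellipticK (kappa τ) / τ := by gcongr; exact log_kappa_add_le_ellipticK hτ
  · calc ellipticK (kappa τ) / τ ≤ ((log 3 + 4 * τ) / kappa τ + π / 2) / τ := by
          gcongr; exact ellipticK_le_log_three_add hτ
      _ = (log 3 * τ⁻¹ + 4) / kappa τ + π / 2 * τ⁻¹ := by field_simp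

lemma G₁₂_add_G₁₁ (hτ : 0 < τ) :
    G₁₂ τ + G₁₁ τ = 4 / (π ^ 2 * kappa τ ^ 2) *
      (ellipticE (kappa τ) ^ 2 - 2 * kappaT τ ^ 2 * ellipticE (kappa τ) * ellipticK (kappa τ)
        + kappaT τ ^ 2 * ellipticK (kappa τ) ^ 2) := by
  have hk : 1 - kappaT τ ^ 2 ≠ 0 := kappa_sq hτ.le ▸ (pow_pos (kappa_pos hτ) 2).ne'
  simp only [G₁₂, G₁₁, kappa_sq hτ.le]
  field_simp
  ring

lemma G₁₂_sub_G₁₁ (hτ : 0 < τ) :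
    G₁₂ τ - G₁₁ τ = 4 / (π ^ 2 * kappa τ ^ 2) *
      (2 * ellipticE (kappa τ) * ellipticK (kappa τ) - ellipticE (kappa τ) ^ 2
        - kappaT τ ^ 2 * ellipticK (kappa τ) ^ 2) := by
  have hk : 1 - kappaT τ ^ 2 ≠ 0 := kappa_sq hτ.le ▸ (pow_pos (kappa_pos hτ) 2).ne'
  simp only [G₁₂, G₁₁, kappa_sq hτ.le]
  field_simp
  ring

lemma tendsto_G₁₂_add_G₁₁ : Tendsto (fun τ => G₁₂ τ + G₁₁ τ) atTop (𝓝 (4 / π ^ 2)) := by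
  have hE := tendsto_ellipticE_kappa
  have hK := tendsto_ellipticK_kappa_div_self
  have h := ((tendsto_kappa.pow 2).const_mul (π ^ 2)).inv₀ (by positivity) |>.const_mul 4 |>.mul
    (((hE.pow 2).sub (((tendsto_pow_mul_kappaT_sq 1).const_mul 2).mul hE |>.mul hK)).add
      ((tendsto_pow_mul_kappaT_sq 2).mul (hK.pow 2)))
  refine (by convert h using 2; ring : Tendsto _ _ (𝓝 (4 / π ^ 2))).congr' ?_
  filter_upwards [eventually_gt_atTop 0] with τ hτ
  rw [G₁₂_add_G₁₁ hτ]
  field_simp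

lemma tendsto_G₁₂_sub_G₁₁_div_self :
    Tendsto (fun τ => (G₁₂ τ - G₁₁ τ) / τ) atTop (𝓝 (32 / π ^ 2)) := by
  have hE := tendsto_ellipticE_kappa
  have hK := tendsto_ellipticK_kappa_div_self
  have h := ((tendsto_kappa.pow 2).const_mul (π ^ 2)).inv₀ (by positivity) |>.const_mul 4 |>.mul
    ((((hE.const_mul 2).mul hK).sub ((hE.pow 2).mul tendsto_inv_atTop_zero)).sub
      ((tendsto_pow_mul_kappaT_sq 1).mul (hK.pow 2)))
  refine (by convert h using 2; ring : Tendsto _ _ (𝓝 (32 / π ^ 2))).congr' ?_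
  filter_upwards [eventually_gt_atTop 0] with τ hτ
  rw [G₁₂_sub_G₁₁ hτ]
  field_simp

lemma tendsto_G₁₂_sq_sub_G₁₁_sq_div_self :
    Tendsto (fun τ => (G₁₂ τ ^ 2 - G₁₁ τ ^ 2) / τ) atTop (𝓝 (128 / π ^ 4)) := by
  convert tendsto_G₁₂_add_G₁₁.mul tendsto_G₁₂_sub_G₁₁_div_self using 2 <;> ring

end Resonance

/-- The Rényi entropy grows logarithmically: R(τ) − (1/2)·log τ → (1/2)·log(128/π⁴). -/
theorem stmt_8 :
    Tendsto (fun τ => (1 / 2) * Real.log (G₁₂ τ ^ 2 - G₁₁ τ ^ 2) -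
      (1 / 2) * Real.log τ) atTop (𝓝 ((1 / 2) * Real.log (128 / Real.pi ^ 4))) := by
  have h := tendsto_G₁₂_sq_sub_G₁₁_sq_div_self
  refine ((h.log (by positivity)).const_mul (1 / 2)).congr' ?_
  filter_upwards [eventually_gt_atTop 0, h.eventually_ne (by positivity)] with τ hτ hne
  rw [log_div (left_ne_zero_of_mul (by simpa [div_eq_mul_inv] using hne)) hτ.ne']
  ring
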